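/- Let f : [0,T) × [0,1] → ℝⁿ be a smooth solution of ∂ₜf = V + φτ, where V is the normal velocity and φ a smooth scalar function. Then for every smooth normal vector field ψ along f (i.e. ⟨ψ(t,x), τ(t,x)⟩ = 0 for all (t,x)), the commutator identity (∇ₜ∇ₛ − ∇ₛ∇ₜ)ψ = (⟨κ, V⟩ − ∂ₛφ) ∇ₛψ + ⟨κ, ψ⟩ ∇ₛV − ⟨∇ₛV, ψ⟩ κ holds on (0,T) × [0,1]. -/

import Mathlib

open Set MeasureTheory
open scoped RealInnerProductSpace

noncomputable section

/-- Arc-length derivative `∂ₛ g = |∂ₓ f|⁻¹ ∂ₓ g` along the curve `f`. -/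
def sDeriv {n : ℕ} {F : Type*} [NormedAddCommGroup F] [NormedSpace ℝ F]
    (f : ℝ → EuclideanSpace ℝ (Fin n)) (g : ℝ → F) (x : ℝ) : F :=
  ‖deriv f x‖⁻¹ • deriv g x

/-- The unit tangent `τ = ∂ₛ f`. -/
def tau {n : ℕ} (f : ℝ → EuclideanSpace ℝ (Fin n)) : ℝ → EuclideanSpace ℝ (Fin n) :=
  sDeriv f f

/-- The curvature vector `κ = ∂ₛ² f`. -/
def kappa {n : ℕ} (f : ℝ → EuclideanSpace ℝ (Fin n)) : ℝ → EuclideanSpace ℝ (Fin n) :=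
  sDeriv f (tau f)

/-- Normal projection of the arc-length derivative: `∇ₛψ = ∂ₛψ − ⟨∂ₛψ, τ⟩ τ`. -/
def nablaS {n : ℕ} (f ψ : ℝ → EuclideanSpace ℝ (Fin n)) (x : ℝ) :
    EuclideanSpace ℝ (Fin n) :=
  sDeriv f ψ x - ⟪sDeriv f ψ x, tau f x⟫ • tau f x

/-- Partial time derivative of a time-dependent field. -/
def pT {F : Type*} [NormedAddCommGroup F] [NormedSpace ℝ F]
    (g : ℝ → ℝ → F) (t x : ℝ) : F :=
  deriv (fun s => g s x) t

/-- Normal projection of the time derivative: `∇ₜψ = ∂ₜψ − ⟨∂ₜψ, τ⟩ τ`. -/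
def nablaT {n : ℕ} (f ψ : ℝ → ℝ → EuclideanSpace ℝ (Fin n)) (t x : ℝ) :
    EuclideanSpace ℝ (Fin n) :=
  pT ψ t x - ⟪pT ψ t x, tau (f t) x⟫ • tau (f t) x

/-!
Differentiating `sDeriv = |∂ₓf|⁻¹ ∂ₓ` in time, with `∂ₜ|∂ₓf| = |∂ₓf| ⟨τ, ∂ₛ∂ₜf⟩` and the symmetry
of mixed partials, gives `∂ₜ∂ₛ = ∂ₛ∂ₜ − ⟨τ, ∂ₛ∂ₜf⟩ ∂ₛ`, and in particular `∂ₜτ = ∇ₛ(∂ₜf)`.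
Both second covariant derivatives then reduce to `∇ₛ∂ₜψ` plus terms involving the tangential
components `⟨∂ₛψ, τ⟩ = −⟨ψ, κ⟩` and `⟨∂ₜψ, τ⟩ = −⟨ψ, ∂ₜτ⟩` of the derivatives of a normal field,
which yields the commutator for an arbitrary motion of the curve. Along `∂ₜf = V + φτ` one has
`∂ₜτ = ∇ₛV + φκ` and `⟨τ, ∂ₛ∂ₜf⟩ = ∂ₛφ − ⟨κ, V⟩`, and the identity follows.

At the endpoints `x ∈ {0, 1}` the relations `⟨ψ, τ⟩ = 0` and `∂ₜf = V + φτ`, known only on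
`[0, 1]`, may still be differentiated, because `[0, 1]` has unique derivatives there.
-/

open Topology
open scoped ContDiff

section TwoParameter

variable {F : Type*} [NormedAddCommGroup F] [NormedSpace ℝ F]

lemma hasDerivAt_comp_prodMk_left {Φ : ℝ × ℝ → F} {t x : ℝ} (hΦ : DifferentiableAt ℝ Φ (t, x)) :
    HasDerivAt (fun s => Φ (s, x)) (fderiv ℝ Φ (t, x) (1, 0)) t :=
  hΦ.hasFDerivAt.comp_hasDerivAt t ((hasDerivAt_id t).prodMk (hasDerivAt_const t x))

lemma hasDerivAt_comp_prodMk_right {Φ : ℝ × ℝ → F} {t x : ℝ} (hΦ : DifferentiableAt ℝ Φ (t, x)) :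
    HasDerivAt (fun y => Φ (t, y)) (fderiv ℝ Φ (t, x) (0, 1)) x :=
  hΦ.hasFDerivAt.comp_hasDerivAt x ((hasDerivAt_const x t).prodMk (hasDerivAt_id x))

variable {g : ℝ → ℝ → F}

lemma pT_eq_fderiv (hg : Differentiable ℝ (Function.uncurry g)) (t x : ℝ) :
    pT g t x = fderiv ℝ (Function.uncurry g) (t, x) (1, 0) :=
  (hasDerivAt_comp_prodMk_left (hg (t, x))).deriv

lemma deriv_slice_eq_fderiv (hg : Differentiable ℝ (Function.uncurry g)) (t x : ℝ) :
    deriv (g t) x = fderiv ℝ (Function.uncurry g) (t, x) (0, 1) :=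
  (hasDerivAt_comp_prodMk_right (hg (t, x))).deriv

lemma hasDerivAt_pT (hg : Differentiable ℝ (Function.uncurry g)) (t x : ℝ) :
    HasDerivAt (fun s => g s x) (pT g t x) t := by
  rw [pT_eq_fderiv hg]
  exact hasDerivAt_comp_prodMk_left (hg _)

lemma hasDerivAt_slice (hg : Differentiable ℝ (Function.uncurry g)) (t x : ℝ) :
    HasDerivAt (g t) (deriv (g t) x) x := by
  rw [deriv_slice_eq_fderiv hg]
  exact hasDerivAt_comp_prodMk_right (hg _)

lemma uncurry_pT_eq (hg : Differentiable ℝ (Function.uncurry g)) :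
    Function.uncurry (pT g) = fun p => fderiv ℝ (Function.uncurry g) p (1, 0) := by
  ext ⟨t, x⟩; exact pT_eq_fderiv hg t x

lemma uncurry_deriv_slice_eq (hg : Differentiable ℝ (Function.uncurry g)) :
    (Function.uncurry fun s => deriv (g s)) = fun p => fderiv ℝ (Function.uncurry g) p (0, 1) := by
  ext ⟨t, x⟩; exact deriv_slice_eq_fderiv hg t x

lemma contDiff_uncurry_pT (hg : ContDiff ℝ ∞ (Function.uncurry g)) :
    ContDiff ℝ ∞ (Function.uncurry (pT g)) := by
  rw [uncurry_pT_eq (hg.differentiable (by simp))]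
  exact (hg.fderiv_right le_rfl).clm_apply contDiff_const

lemma contDiff_uncurry_deriv (hg : ContDiff ℝ ∞ (Function.uncurry g)) :
    ContDiff ℝ ∞ (Function.uncurry fun s => deriv (g s)) := by
  rw [uncurry_deriv_slice_eq (hg.differentiable (by simp))]
  exact (hg.fderiv_right le_rfl).clm_apply contDiff_const

lemma deriv_pT (hg : ContDiff ℝ ∞ (Function.uncurry g)) (t x : ℝ) :
    deriv (pT g t) x = pT (fun s => deriv (g s)) t x := by
  have hg₁ : Differentiable ℝ (Function.uncurry g) := hg.differentiable (by simp)
  have hg₂ : Differentiable ℝ (fderiv ℝ (Function.uncurry g)) :=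
    (hg.fderiv_right (m := ∞) le_rfl).differentiable (by simp)
  have hpartial : ∀ v : ℝ × ℝ, fderiv ℝ (fun p => fderiv ℝ (Function.uncurry g) p v) (t, x)
      = (fderiv ℝ (fderiv ℝ (Function.uncurry g)) (t, x)).flip v := by
    intro v
    rw [fderiv_clm_apply (hg₂ _) (differentiableAt_const v)]
    simp
  rw [deriv_slice_eq_fderiv ((contDiff_uncurry_pT hg).differentiable (by simp)) t x,
    pT_eq_fderiv ((contDiff_uncurry_deriv hg).differentiable (by simp)) t x,
    uncurry_pT_eq hg₁, uncurry_deriv_slice_eq hg₁, hpartial, hpartial]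
  exact ((hg.contDiffAt (x := (t, x))).isSymmSndFDerivAt (by simp; decide)).eq _ _

lemma differentiableAt_deriv_slice (hg : ContDiff ℝ ∞ (Function.uncurry g)) (t x : ℝ) :
    DifferentiableAt ℝ (deriv (g t)) x :=
  (hasDerivAt_slice ((contDiff_uncurry_deriv hg).differentiable (by simp)) t x).differentiableAt

lemma hasDerivAt_pT_deriv (hg : ContDiff ℝ ∞ (Function.uncurry g)) (t x : ℝ) :
    HasDerivAt (fun s => deriv (g s) x) (deriv (pT g t) x) t := by
  rw [deriv_pT hg]
  exact hasDerivAt_pT ((contDiff_uncurry_deriv hg).differentiable (by simp)) t x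

end TwoParameter

section InnerProductSpace

variable {E : Type*} [NormedAddCommGroup E] [InnerProductSpace ℝ E]

lemma HasDerivAt.eq_of_eqOn {F : Type*} [NormedAddCommGroup F] [NormedSpace ℝ F]
    {g h : ℝ → F} {g' h' : F} {s : Set ℝ} {x : ℝ} (hg : HasDerivAt g g' x)
    (hh : HasDerivAt h h' x) (hs : UniqueDiffWithinAt ℝ s x) (hx : x ∈ s) (hgh : EqOn g h s) :
    g' = h' :=
  hs.eq_deriv s hg.hasDerivWithinAt (hh.hasDerivWithinAt.congr_of_mem (fun _ hy => hgh hy) hx)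

lemma HasDerivAt.norm {c : ℝ → E} {c' : E} {s : ℝ} (hc : HasDerivAt c c' s) (h0 : c s ≠ 0) :
    HasDerivAt (fun r => ‖c r‖) (⟪c s, c'⟫ / ‖c s‖) s := by
  have h := hc.norm_sq.sqrt (by simpa using h0)
  simp only [Real.sqrt_sq (norm_nonneg _)] at h
  convert h using 1
  field_simp

def normalProj (τ : E) : E →L[ℝ] E :=
  ContinuousLinearMap.id ℝ E - (innerSL ℝ τ).smulRight τ

@[simp]
lemma normalProj_apply (τ v : E) : normalProj τ v = v - ⟪v, τ⟫ • τ := by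
  simp [normalProj, real_inner_comm]

variable {τ v : E}

lemma inner_normalProj_self (hτ : ‖τ‖ = 1) : ⟪normalProj τ v, τ⟫ = 0 := by
  simp [inner_sub_left, real_inner_smul_left, hτ]

lemma normalProj_self (hτ : ‖τ‖ = 1) : normalProj τ τ = 0 := by
  simp [hτ]

lemma normalProj_of_inner_eq_zero (h : ⟪v, τ⟫ = 0) : normalProj τ v = v := by
  simp [h]

lemma normalProj_deriv {v τ : ℝ → E} {v' τ' : E} {s : ℝ} (hv : HasDerivAt v v' s)
    (hτ : HasDerivAt τ τ' s) (hunit : ‖τ s‖ = 1) (horth : ⟪τ', τ s⟫ = 0) :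
    normalProj (τ s) (deriv (fun r => normalProj (τ r) (v r)) s)
      = normalProj (τ s) v' - ⟪v s, τ s⟫ • τ' := by
  have h : HasDerivAt (fun r => normalProj (τ r) (v r))
      (v' - (⟪v s, τ s⟫ • τ' + (⟪v s, τ'⟫ + ⟪v', τ s⟫) • τ s)) s := by
    simp only [normalProj_apply]
    exact hv.sub ((hv.inner ℝ hτ).smul hτ)
  rw [h.deriv, map_sub, map_add, map_smul, map_smul, normalProj_self hunit,
    normalProj_of_inner_eq_zero horth, smul_zero, add_zero]

end InnerProductSpace

section Curve

variable {n : ℕ} {c : ℝ → EuclideanSpace ℝ (Fin n)} {x : ℝ}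

lemma norm_tau (hx : deriv c x ≠ 0) : ‖tau c x‖ = 1 := by
  simp [tau, sDeriv, norm_smul, hx]

lemma hasDerivAt_tau (hc : DifferentiableAt ℝ (deriv c) x) (hx : deriv c x ≠ 0) :
    HasDerivAt (tau c) (‖deriv c x‖ • kappa c x) x := by
  have hu : ‖deriv c x‖ ≠ 0 := norm_ne_zero_iff.2 hx
  have h : DifferentiableAt ℝ (tau c) x := ((hc.norm ℝ hx).inv hu).smul hc
  rw [kappa, sDeriv, smul_inv_smul₀ hu]
  exact h.hasDerivAt

lemma inner_kappa_tau (hc : DifferentiableAt ℝ (deriv c) x) (hx : deriv c x ≠ 0) :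
    ⟪kappa c x, tau c x⟫ = 0 := by
  have hu : ‖deriv c x‖ ≠ 0 := norm_ne_zero_iff.2 hx
  have hτ := hasDerivAt_tau hc hx
  have hunit : (fun y => ⟪tau c y, tau c y⟫) =ᶠ[𝓝 x] fun _ => 1 := by
    filter_upwards [hc.continuousAt.eventually_ne hx] with y hy
    rw [real_inner_self_eq_norm_sq, norm_tau hy, one_pow]
  have h := (hτ.inner ℝ hτ).unique ((hasDerivAt_const x (1 : ℝ)).congr_of_eventuallyEq hunit)
  rw [real_inner_smul_left, real_inner_smul_right, real_inner_comm (kappa c x)] at h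
  have : ‖deriv c x‖ * (2 * ⟪kappa c x, tau c x⟫) = 0 := by linarith
  simpa [hu] using this

lemma inner_sDeriv_tau_of_eqOn {ψ : ℝ → EuclideanSpace ℝ (Fin n)} {s : Set ℝ}
    (hc : DifferentiableAt ℝ (deriv c) x) (hx : deriv c x ≠ 0) (hψ : DifferentiableAt ℝ ψ x)
    (hs : UniqueDiffWithinAt ℝ s x) (hxs : x ∈ s) (hnormal : ∀ y ∈ s, ⟪ψ y, tau c y⟫ = 0) :
    ⟪sDeriv c ψ x, tau c x⟫ = -⟪ψ x, kappa c x⟫ := by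
  have hu : ‖deriv c x‖ ≠ 0 := norm_ne_zero_iff.2 hx
  have h := (hψ.hasDerivAt.inner ℝ (hasDerivAt_tau hc hx)).eq_of_eqOn (hasDerivAt_const x 0)
    hs hxs hnormal
  rw [real_inner_smul_right] at h
  rw [sDeriv, real_inner_smul_left]
  field_simp
  linarith

end Curve

section Family

variable {n : ℕ} {f ψ : ℝ → ℝ → EuclideanSpace ℝ (Fin n)} {t x : ℝ}

lemma nablaS_eq_normalProj (c ψ : ℝ → EuclideanSpace ℝ (Fin n)) (x : ℝ) :
    nablaS c ψ x = normalProj (tau c x) (sDeriv c ψ x) :=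
  (normalProj_apply _ _).symm

lemma nablaT_eq_normalProj (ψ : ℝ → ℝ → EuclideanSpace ℝ (Fin n)) (t x : ℝ) :
    nablaT f ψ t x = normalProj (tau (f t) x) (pT ψ t x) :=
  (normalProj_apply _ _).symm

lemma hasDerivAt_sDeriv_time {F : Type*} [NormedAddCommGroup F] [NormedSpace ℝ F]
    {g : ℝ → ℝ → F} (hf : ContDiff ℝ ∞ (Function.uncurry f))
    (hg : ContDiff ℝ ∞ (Function.uncurry g)) (hreg : deriv (f t) x ≠ 0) :
    HasDerivAt (fun s => sDeriv (f s) (g s) x)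
      (sDeriv (f t) (pT g t) x
        - ⟪tau (f t) x, sDeriv (f t) (pT f t) x⟫ • sDeriv (f t) (g t) x) t := by
  have hu : ‖deriv (f t) x‖ ≠ 0 := norm_ne_zero_iff.2 hreg
  refine ((((hasDerivAt_pT_deriv hf t x).norm hreg).inv hu).smul
    (hasDerivAt_pT_deriv hg t x)).congr_deriv ?_
  simp only [tau, sDeriv, real_inner_smul_left, real_inner_smul_right, smul_smul]
  module

lemma hasDerivAt_tau_time (hf : ContDiff ℝ ∞ (Function.uncurry f)) (hreg : deriv (f t) x ≠ 0) :
    HasDerivAt (fun s => tau (f s) x) (nablaS (f t) (pT f t) x) t := by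
  refine (hasDerivAt_sDeriv_time hf hf hreg).congr_deriv ?_
  rw [nablaS, real_inner_comm]
  rfl

lemma nablaT_nablaS (hf : ContDiff ℝ ∞ (Function.uncurry f))
    (hψ : ContDiff ℝ ∞ (Function.uncurry ψ)) (hreg : deriv (f t) x ≠ 0) :
    nablaT f (fun s => nablaS (f s) (ψ s)) t x
      = nablaS (f t) (pT ψ t) x
        - ⟪tau (f t) x, sDeriv (f t) (pT f t) x⟫ • nablaS (f t) (ψ t) x
        - ⟪sDeriv (f t) (ψ t) x, tau (f t) x⟫ • nablaS (f t) (pT f t) x := by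
  have hunit := norm_tau hreg
  have h := normalProj_deriv (hasDerivAt_sDeriv_time hf hψ hreg) (hasDerivAt_tau_time hf hreg)
    hunit (by rw [nablaS_eq_normalProj]; exact inner_normalProj_self hunit)
  simp only [nablaS_eq_normalProj, nablaT_eq_normalProj, pT] at h ⊢
  rw [h, map_sub, map_smul]

lemma nablaS_nablaT (hf : ContDiff ℝ ∞ (Function.uncurry f))
    (hψ : ContDiff ℝ ∞ (Function.uncurry ψ)) (hreg : deriv (f t) x ≠ 0) :
    nablaS (f t) (nablaT f ψ t) x
      = nablaS (f t) (pT ψ t) x - ⟪pT ψ t x, tau (f t) x⟫ • kappa (f t) x := by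
  have hu : ‖deriv (f t) x‖ ≠ 0 := norm_ne_zero_iff.2 hreg
  have hf' := differentiableAt_deriv_slice hf t x
  have h := normalProj_deriv
    (hasDerivAt_slice ((contDiff_uncurry_pT hψ).differentiable (by simp)) t x)
    (hasDerivAt_tau hf' hreg) (norm_tau hreg)
    (by rw [real_inner_smul_left, inner_kappa_tau hf' hreg, mul_zero])
  have hfun : nablaT f ψ t = fun y => normalProj (tau (f t) y) (pT ψ t y) :=
    funext (nablaT_eq_normalProj ψ t)
  rw [nablaS_eq_normalProj, nablaS_eq_normalProj, sDeriv, sDeriv, hfun, map_smul, map_smul, h,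
    smul_sub, smul_smul, smul_smul]
  congr 2
  field_simp

lemma nablaT_nablaS_sub_nablaS_nablaT (hf : ContDiff ℝ ∞ (Function.uncurry f))
    (hψ : ContDiff ℝ ∞ (Function.uncurry ψ)) {I J : Set ℝ} (hI : UniqueDiffWithinAt ℝ I t)
    (hJ : UniqueDiffWithinAt ℝ J x) (ht : t ∈ I) (hx : x ∈ J) (hreg : deriv (f t) x ≠ 0)
    (hnormal : ∀ s ∈ I, ∀ y ∈ J, ⟪ψ s y, tau (f s) y⟫ = 0) :
    nablaT f (fun s => nablaS (f s) (ψ s)) t x - nablaS (f t) (nablaT f ψ t) x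
      = -⟪tau (f t) x, sDeriv (f t) (pT f t) x⟫ • nablaS (f t) (ψ t) x
        + ⟪ψ t x, kappa (f t) x⟫ • nablaS (f t) (pT f t) x
        - ⟪ψ t x, nablaS (f t) (pT f t) x⟫ • kappa (f t) x := by
  have hf' := differentiableAt_deriv_slice hf t x
  have hψ₁ : Differentiable ℝ (Function.uncurry ψ) := hψ.differentiable (by simp)
  have hψx : ⟪sDeriv (f t) (ψ t) x, tau (f t) x⟫ = -⟪ψ t x, kappa (f t) x⟫ :=
    inner_sDeriv_tau_of_eqOn hf' hreg (hasDerivAt_slice hψ₁ t x).differentiableAt hJ hx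
      (hnormal t ht)
  have hψt : ⟪pT ψ t x, tau (f t) x⟫ = -⟪ψ t x, nablaS (f t) (pT f t) x⟫ := by
    have h := ((hasDerivAt_pT hψ₁ t x).inner ℝ (hasDerivAt_tau_time hf hreg)).eq_of_eqOn
      (hasDerivAt_const t 0) hI ht (fun s hs => hnormal s hs x hx)
    linarith
  rw [nablaT_nablaS hf hψ hreg, nablaS_nablaT hf hψ hreg, hψx, hψt]
  module

end Family

section Flow

variable {n : ℕ} {f V : ℝ → ℝ → EuclideanSpace ℝ (Fin n)} {φ : ℝ → ℝ → ℝ} {t x : ℝ}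
  {J : Set ℝ}

lemma sDeriv_pT_of_flow (hf : ContDiff ℝ ∞ (Function.uncurry f))
    (hV : Differentiable ℝ (Function.uncurry V)) (hφ : Differentiable ℝ (Function.uncurry φ))
    (hJ : UniqueDiffWithinAt ℝ J x) (hx : x ∈ J) (hreg : deriv (f t) x ≠ 0)
    (hflow : ∀ y ∈ J, pT f t y = V t y + φ t y • tau (f t) y) :
    sDeriv (f t) (pT f t) x
      = sDeriv (f t) (V t) x + sDeriv (f t) (φ t) x • tau (f t) x + φ t x • kappa (f t) x := by
  have hu : ‖deriv (f t) x‖ ≠ 0 := norm_ne_zero_iff.2 hreg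
  have hf' := differentiableAt_deriv_slice hf t x
  have h := (hasDerivAt_slice ((contDiff_uncurry_pT hf).differentiable (by simp)) t x).eq_of_eqOn
    ((hasDerivAt_slice hV t x).add ((hasDerivAt_slice hφ t x).smul (hasDerivAt_tau hf' hreg)))
    hJ hx hflow
  rw [sDeriv, h, sDeriv, sDeriv, smul_eq_mul]
  match_scalars <;> field_simp

lemma nablaS_pT_of_flow (hf : ContDiff ℝ ∞ (Function.uncurry f))
    (hV : Differentiable ℝ (Function.uncurry V)) (hφ : Differentiable ℝ (Function.uncurry φ))
    (hJ : UniqueDiffWithinAt ℝ J x) (hx : x ∈ J) (hreg : deriv (f t) x ≠ 0)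
    (hflow : ∀ y ∈ J, pT f t y = V t y + φ t y • tau (f t) y) :
    nablaS (f t) (pT f t) x = nablaS (f t) (V t) x + φ t x • kappa (f t) x := by
  have hf' := differentiableAt_deriv_slice hf t x
  rw [nablaS_eq_normalProj, nablaS_eq_normalProj, sDeriv_pT_of_flow hf hV hφ hJ hx hreg hflow,
    map_add, map_add, map_smul, map_smul, normalProj_self (norm_tau hreg),
    normalProj_of_inner_eq_zero (inner_kappa_tau hf' hreg), smul_zero, add_zero]

lemma inner_tau_sDeriv_pT_of_flow (hf : ContDiff ℝ ∞ (Function.uncurry f))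
    (hV : Differentiable ℝ (Function.uncurry V)) (hφ : Differentiable ℝ (Function.uncurry φ))
    (hJ : UniqueDiffWithinAt ℝ J x) (hx : x ∈ J) (hreg : deriv (f t) x ≠ 0)
    (hnormal : ∀ y ∈ J, ⟪V t y, tau (f t) y⟫ = 0)
    (hflow : ∀ y ∈ J, pT f t y = V t y + φ t y • tau (f t) y) :
    ⟪tau (f t) x, sDeriv (f t) (pT f t) x⟫ = sDeriv (f t) (φ t) x - ⟪kappa (f t) x, V t x⟫ := by
  have hf' := differentiableAt_deriv_slice hf t x
  have hVx := inner_sDeriv_tau_of_eqOn hf' hreg (hasDerivAt_slice hV t x).differentiableAt hJ hx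
    hnormal
  rw [sDeriv_pT_of_flow hf hV hφ hJ hx hreg hflow, inner_add_right, inner_add_right,
    real_inner_smul_right, real_inner_smul_right, real_inner_comm _ (tau (f t) x), hVx,
    real_inner_self_eq_norm_sq, norm_tau hreg, real_inner_comm (kappa (f t) x) (tau (f t) x),
    inner_kappa_tau hf' hreg, real_inner_comm (kappa (f t) x) (V t x)]
  ring

end Flow

theorem normal_commutator_general {n : ℕ} (T : ℝ)
    (f V : ℝ → ℝ → EuclideanSpace ℝ (Fin n)) (φ : ℝ → ℝ → ℝ)
    (hf : ContDiff ℝ (⊤ : ℕ∞) (Function.uncurry f))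
    (hV : ContDiff ℝ (⊤ : ℕ∞) (Function.uncurry V))
    (hφ : ContDiff ℝ (⊤ : ℕ∞) (Function.uncurry φ))
    (hreg : ∀ t ∈ Ico (0 : ℝ) T, ∀ x ∈ Icc (0 : ℝ) 1, deriv (f t) x ≠ 0)
    (hnormal : ∀ t ∈ Ico (0 : ℝ) T, ∀ x ∈ Icc (0 : ℝ) 1, ⟪V t x, tau (f t) x⟫ = 0)
    (hflow : ∀ t ∈ Ico (0 : ℝ) T, ∀ x ∈ Icc (0 : ℝ) 1,
      pT f t x = V t x + φ t x • tau (f t) x)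
    (ψ : ℝ → ℝ → EuclideanSpace ℝ (Fin n))
    (hψ : ContDiff ℝ (⊤ : ℕ∞) (Function.uncurry ψ))
    (hψnormal : ∀ t ∈ Ico (0 : ℝ) T, ∀ x ∈ Icc (0 : ℝ) 1, ⟪ψ t x, tau (f t) x⟫ = 0) :
    ∀ t ∈ Ioo (0 : ℝ) T, ∀ x ∈ Icc (0 : ℝ) 1,
      nablaT f (fun s => nablaS (f s) (ψ s)) t x - nablaS (f t) (nablaT f ψ t) x
        = (⟪kappa (f t) x, V t x⟫ - sDeriv (f t) (φ t) x) • nablaS (f t) (ψ t) x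
          + ⟪kappa (f t) x, ψ t x⟫ • nablaS (f t) (V t) x
          - ⟪nablaS (f t) (V t) x, ψ t x⟫ • kappa (f t) x := by
  intro t ht x hx
  have htI : t ∈ Ico (0 : ℝ) T := Ioo_subset_Ico_self ht
  have hJ : UniqueDiffWithinAt ℝ (Icc (0 : ℝ) 1) x := uniqueDiffOn_Icc_zero_one x hx
  have hreg' := hreg t htI x hx
  have hV₁ := hV.differentiable (by simp)
  have hφ₁ := hφ.differentiable (by simp)
  rw [nablaT_nablaS_sub_nablaS_nablaT hf hψ (uniqueDiffOn_Ico 0 T t htI) hJ htI hx hreg'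
      hψnormal,
    inner_tau_sDeriv_pT_of_flow hf hV₁ hφ₁ hJ hx hreg' (hnormal t htI) (hflow t htI),
    nablaS_pT_of_flow hf hV₁ hφ₁ hJ hx hreg' (hflow t htI),
    inner_add_right, real_inner_smul_right, real_inner_comm (kappa (f t) x) (ψ t x),
    real_inner_comm (nablaS (f t) (V t) x) (ψ t x)]
  module

/-- Commutator identity for `∇ₜ` and `∇ₛ` acting on a normal field `ψ` along the flow
`∂ₜ f = V + φ τ`:
`(∇ₜ∇ₛ − ∇ₛ∇ₜ)ψ = (⟨κ, V⟩ − ∂ₛφ) ∇ₛψ + ⟨κ, ψ⟩ ∇ₛV − ⟨∇ₛV, ψ⟩ κ`. -/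
theorem normal_commutator {n : ℕ} (hn : 2 ≤ n) (T : ℝ) (hT : 0 < T)
    (f V : ℝ → ℝ → EuclideanSpace ℝ (Fin n)) (φ : ℝ → ℝ → ℝ)
    (hf : ContDiff ℝ (⊤ : ℕ∞) (Function.uncurry f))
    (hV : ContDiff ℝ (⊤ : ℕ∞) (Function.uncurry V))
    (hφ : ContDiff ℝ (⊤ : ℕ∞) (Function.uncurry φ))
    (hreg : ∀ t ∈ Ico (0 : ℝ) T, ∀ x ∈ Icc (0 : ℝ) 1, deriv (f t) x ≠ 0)
    (hnormal : ∀ t ∈ Ico (0 : ℝ) T, ∀ x ∈ Icc (0 : ℝ) 1, ⟪V t x, tau (f t) x⟫ = 0)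
    (hflow : ∀ t ∈ Ico (0 : ℝ) T, ∀ x ∈ Icc (0 : ℝ) 1,
      pT f t x = V t x + φ t x • tau (f t) x)
    (ψ : ℝ → ℝ → EuclideanSpace ℝ (Fin n))
    (hψ : ContDiff ℝ (⊤ : ℕ∞) (Function.uncurry ψ))
    (hψnormal : ∀ t ∈ Ico (0 : ℝ) T, ∀ x ∈ Icc (0 : ℝ) 1, ⟪ψ t x, tau (f t) x⟫ = 0) :
    ∀ t ∈ Ioo (0 : ℝ) T, ∀ x ∈ Icc (0 : ℝ) 1,
      nablaT f (fun s => nablaS (f s) (ψ s)) t x - nablaS (f t) (nablaT f ψ t) x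
        = (⟪kappa (f t) x, V t x⟫ - sDeriv (f t) (φ t) x) • nablaS (f t) (ψ t) x
          + ⟪kappa (f t) x, ψ t x⟫ • nablaS (f t) (V t) x
          - ⟪nablaS (f t) (V t) x, ψ t x⟫ • kappa (f t) x :=
  normal_commutator_general T f V φ hf hV hφ hreg hnormal hflow ψ hψ hψnormal
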